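/- (Theorem 4, η-coordinates) For every η ∈ U and all x, y, z ∈ S⁺, the Riemannian connection coefficient Γ_{xyz}(η) = (1/2)(∂g_{yz}(η)/∂η(x) + ∂g_{xz}(η)/∂η(y) − ∂g_{xy}(η)/∂η(z)), where g_{xy}(η) = ∂²φ(η)/∂η(x)∂η(y), satisfies Γ_{xyz}(η) = −(1/2) Σ_{s∈S} μ(s,x) μ(s,y) μ(s,z) p_η(s)^{-2}. -/

import Mathlib

/-!
Along a coordinate line `t ↦ η[v := t]` every `p_η(s)` is affine with slope `μ(s,v)`, so the
partial derivative of any `η ↦ Σ_s h_s(p_η(s))` is `Σ_s μ(s,v) h_s'(p_η(s))` on `U`. Since `U` is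
open, these identities hold on a neighbourhood of `η` and can be differentiated again. Applying this
three times to `h(r) = r log r` gives `∂³φ/∂η(u)∂η(v)∂η(w) = -Σ_s μ(s,u) μ(s,v) μ(s,w) p_η(s)⁻²`,
which is symmetric in `u, v, w`; so `Γ_{xyz}` is half of it.
-/

local instance {S : Type*} [PartialOrder S] [DecidableEq S]
    [DecidableRel ((· ≤ ·) : S → S → Prop)] :
    DecidableRel ((· < ·) : S → S → Prop) :=
  fun a b => decidable_of_iff (a ≤ b ∧ a ≠ b) lt_iff_le_and_ne.symm

/-- The extension of `η : ℝ^{S⁺}` to `S` with `η(⊥) = 1`. -/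
noncomputable def etaBar {S : Type*} [PartialOrder S] [OrderBot S] [DecidableEq S]
    (η : {x : S // x ≠ ⊥} → ℝ) (s : S) : ℝ :=
  if h : s = ⊥ then 1 else η ⟨s, h⟩

/-- `p_η(x) = Σ_{s ≥ x} μ(x,s) η(s)`, where `η(⊥) = 1`. -/
noncomputable def pEta {S : Type*} [Fintype S] [PartialOrder S] [OrderBot S] [DecidableEq S]
    [DecidableRel ((· ≤ ·) : S → S → Prop)]
    (mu : S → S → ℤ) (η : {x : S // x ≠ ⊥} → ℝ) (x : S) : ℝ :=
  ∑ s ∈ Finset.univ.filter (fun s => x ≤ s), (mu x s : ℝ) * etaBar η s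

/-- `φ(η) = Σ_{x∈S} p_η(x) log p_η(x)`. -/
noncomputable def phi {S : Type*} [Fintype S] [PartialOrder S] [OrderBot S] [DecidableEq S]
    [DecidableRel ((· ≤ ·) : S → S → Prop)]
    (mu : S → S → ℤ) (η : {x : S // x ≠ ⊥} → ℝ) : ℝ :=
  ∑ x : S, pEta mu η x * Real.log (pEta mu η x)

/-- Partial derivative of a function `f : ℝ^{S⁺} → ℝ` with respect to the coordinate `x`. -/
noncomputable def pd {S : Type*} [Fintype S] [PartialOrder S] [OrderBot S] [DecidableEq S]
    (f : ({x : S // x ≠ ⊥} → ℝ) → ℝ) (x : {x : S // x ≠ ⊥})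
    (η : {x : S // x ≠ ⊥} → ℝ) : ℝ :=
  deriv (fun t => f (Function.update η x t)) (η x)

open Filter Topology Function

section

variable {S : Type*} [PartialOrder S] [OrderBot S] [DecidableEq S]

theorem etaBar_update (η : {x : S // x ≠ ⊥} → ℝ) (v : {x : S // x ≠ ⊥}) (t : ℝ) (s : S) :
    etaBar (update η v t) s = etaBar η s + if s = v then t - η v else 0 := by
  unfold etaBar
  split_ifs with hs hsv hsv
  · exact absurd (hs ▸ hsv).symm v.2
  · ring
  · obtain rfl : (⟨s, hs⟩ : {x : S // x ≠ ⊥}) = v := Subtype.ext hsv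
    simp
  · rw [update_of_ne (fun h => hsv (congrArg Subtype.val h)), add_zero]

variable [Fintype S]

theorem pd_congr {f g : ({x : S // x ≠ ⊥} → ℝ) → ℝ} {η : {x : S // x ≠ ⊥} → ℝ}
    (h : f =ᶠ[𝓝 η] g) (v : {x : S // x ≠ ⊥}) : pd f v η = pd g v η := by
  have hline : Tendsto (fun t => update η v t) (𝓝 (η v)) (𝓝 η) := by
    simpa using ((continuous_const (y := η)).update v continuous_id).tendsto (η v)
  exact Filter.EventuallyEq.deriv_eq (hline.eventually h)

variable [DecidableRel ((· ≤ ·) : S → S → Prop)] {mu : S → S → ℤ}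

theorem pEta_update (hmu_nle : ∀ x y : S, ¬ x ≤ y → mu x y = 0)
    (η : {x : S // x ≠ ⊥} → ℝ) (v : {x : S // x ≠ ⊥}) (t : ℝ) (s : S) :
    pEta mu (update η v t) s = pEta mu η s + mu s v * (t - η v) := by
  simp only [pEta, etaBar_update, mul_add, Finset.sum_add_distrib, mul_ite, mul_zero,
    Finset.sum_ite_eq', Finset.mem_filter, Finset.mem_univ, true_and]
  by_cases hsv : s ≤ v
  · rw [if_pos hsv]
  · rw [if_neg hsv, hmu_nle s v hsv]
    simp

theorem hasDerivAt_pEta_update (hmu_nle : ∀ x y : S, ¬ x ≤ y → mu x y = 0)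
    (η : {x : S // x ≠ ⊥} → ℝ) (v : {x : S // x ≠ ⊥}) (s : S) (t : ℝ) :
    HasDerivAt (fun t => pEta mu (update η v t) s) (mu s v) t := by
  simp only [pEta_update hmu_nle]
  simpa using (((hasDerivAt_id t).sub_const (η v)).const_mul (mu s v : ℝ)).const_add (pEta mu η s)

theorem continuous_pEta (s : S) : Continuous fun η : {x : S // x ≠ ⊥} → ℝ => pEta mu η s := by
  refine continuous_finsetSum _ fun w _ => continuous_const.mul ?_
  unfold etaBar
  split_ifs
  · exact continuous_const
  · exact continuous_apply _

theorem isOpen_setOf_forall_pEta_pos :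
    IsOpen {η : {x : S // x ≠ ⊥} → ℝ | ∀ s, 0 < pEta mu η s} := by
  simp only [Set.ofPred_forall]
  exact isOpen_iInter_of_finite fun s => isOpen_lt continuous_const (continuous_pEta s)

theorem pd_sum_comp_pEta (hmu_nle : ∀ x y : S, ¬ x ≤ y → mu x y = 0) (h h' : S → ℝ → ℝ)
    (hh : ∀ s r, 0 < r → HasDerivAt (h s) (h' s r) r)
    {η : {x : S // x ≠ ⊥} → ℝ} (hη : ∀ s, 0 < pEta mu η s) (v : {x : S // x ≠ ⊥}) :
    pd (fun η => ∑ s, h s (pEta mu η s)) v η = ∑ s, mu s v * h' s (pEta mu η s) := by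
  refine HasDerivAt.deriv (HasDerivAt.fun_sum fun s _ => ?_)
  have hp := hasDerivAt_pEta_update hmu_nle η v s (η v)
  have hh' := hh s _ (hη s)
  rw [← update_eq_self v η] at hh'
  have hcomp := hh'.comp (η v) hp
  rwa [update_eq_self, mul_comm] at hcomp

theorem pd_phi_eventuallyEq (hmu_nle : ∀ x y : S, ¬ x ≤ y → mu x y = 0)
    {η : {x : S // x ≠ ⊥} → ℝ} (hη : ∀ s, 0 < pEta mu η s) (v : {x : S // x ≠ ⊥}) :
    pd (phi mu) v =ᶠ[𝓝 η] fun η => ∑ s, mu s v * (Real.log (pEta mu η s) + 1) := by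
  filter_upwards [isOpen_setOf_forall_pEta_pos.mem_nhds hη] with η' hη'
  refine pd_sum_comp_pEta hmu_nle (fun _ r => r * Real.log r) (fun _ r => Real.log r + 1)
    (fun _ r hr => ?_) hη' v
  simpa [mul_inv_cancel₀ hr.ne'] using (hasDerivAt_id' r).fun_mul (Real.hasDerivAt_log hr.ne')

theorem pd_pd_phi_eventuallyEq (hmu_nle : ∀ x y : S, ¬ x ≤ y → mu x y = 0)
    {η : {x : S // x ≠ ⊥} → ℝ} (hη : ∀ s, 0 < pEta mu η s) (v w : {x : S // x ≠ ⊥}) :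
    pd (pd (phi mu) v) w =ᶠ[𝓝 η] fun η => ∑ s, mu s v * mu s w * (pEta mu η s)⁻¹ := by
  filter_upwards [isOpen_setOf_forall_pEta_pos.mem_nhds hη] with η' hη'
  rw [pd_congr (pd_phi_eventuallyEq hmu_nle hη' v) w]
  refine (pd_sum_comp_pEta hmu_nle (fun s r => mu s v * (Real.log r + 1))
    (fun s r => mu s v * r⁻¹) (fun s r hr => ?_) hη' w).trans ?_
  · exact ((Real.hasDerivAt_log hr.ne').add_const 1).const_mul _
  · exact Finset.sum_congr rfl fun s _ => by ring

theorem pd_pd_pd_phi (hmu_nle : ∀ x y : S, ¬ x ≤ y → mu x y = 0)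
    {η : {x : S // x ≠ ⊥} → ℝ} (hη : ∀ s, 0 < pEta mu η s) (u v w : {x : S // x ≠ ⊥}) :
    pd (pd (pd (phi mu) u) v) w η
      = -∑ s, (mu s u : ℝ) * mu s v * mu s w * (pEta mu η s ^ 2)⁻¹ := by
  rw [pd_congr (pd_pd_phi_eventuallyEq hmu_nle hη u v) w]
  refine (pd_sum_comp_pEta hmu_nle (fun s r => mu s u * mu s v * r⁻¹)
    (fun s r => mu s u * mu s v * -(r ^ 2)⁻¹) (fun s r hr => ?_) hη w).trans ?_
  · exact (hasDerivAt_inv hr.ne').const_mul _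
  · rw [← Finset.sum_neg_distrib]
    exact Finset.sum_congr rfl fun s _ => by ring

end

theorem gamma_eta_general {S : Type*} [Fintype S] [PartialOrder S] [OrderBot S]
    [DecidableEq S] [DecidableRel ((· ≤ ·) : S → S → Prop)]
    (mu : S → S → ℤ)
    (hmu_nle : ∀ x y : S, ¬ x ≤ y → mu x y = 0)
    (η : {x : S // x ≠ ⊥} → ℝ) (hU : ∀ s : S, 0 < pEta mu η s) (x y z : {x : S // x ≠ ⊥}) :
    (1 / 2 : ℝ) * (pd (pd (pd (phi mu) z) y) x η + pd (pd (pd (phi mu) z) x) y η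
        - pd (pd (pd (phi mu) y) x) z η)
      = -(1 / 2 : ℝ) * ∑ s : S, (mu s (x : S) : ℝ) * (mu s (y : S) : ℝ) * (mu s (z : S) : ℝ)
          * (pEta mu η s ^ 2)⁻¹ := by
  simp only [pd_pd_pd_phi hmu_nle hU, ← Finset.sum_neg_distrib, ← Finset.sum_add_distrib,
    ← Finset.sum_sub_distrib, Finset.mul_sum]
  exact Finset.sum_congr rfl fun s _ => by ring

/-- (Theorem 4, η-coordinates) With `g_{xy}(η) = ∂²φ(η)/∂η(x)∂η(y)`, the Riemannian connection
coefficient `Γ_{xyz}(η) = (1/2)(∂g_{yz}/∂η(x) + ∂g_{xz}/∂η(y) − ∂g_{xy}/∂η(z))` satisfies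
`Γ_{xyz}(η) = −(1/2) Σ_{s∈S} μ(s,x) μ(s,y) μ(s,z) p_η(s)⁻²` for every `η ∈ U`. -/
theorem gamma_eta {S : Type*} [Fintype S] [PartialOrder S] [OrderBot S]
    [DecidableEq S] [DecidableRel ((· ≤ ·) : S → S → Prop)]
    (mu : S → S → ℤ)
    (hmu_self : ∀ x : S, mu x x = 1)
    (hmu_lt : ∀ x y : S, x < y →
      mu x y = -∑ s ∈ Finset.univ.filter (fun s => x ≤ s ∧ s < y), mu x s)
    (hmu_nle : ∀ x y : S, ¬ x ≤ y → mu x y = 0)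
    (η : {x : S // x ≠ ⊥} → ℝ) (hU : ∀ s : S, 0 < pEta mu η s) (x y z : {x : S // x ≠ ⊥}) :
    (1 / 2 : ℝ) * (pd (pd (pd (phi mu) z) y) x η + pd (pd (pd (phi mu) z) x) y η
        - pd (pd (pd (phi mu) y) x) z η)
      = -(1 / 2 : ℝ) * ∑ s : S, (mu s (x : S) : ℝ) * (mu s (y : S) : ℝ) * (mu s (z : S) : ℝ)
          * (pEta mu η s ^ 2)⁻¹ :=
  gamma_eta_general mu hmu_nle η hU x y z
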